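/- Let a ≥ 0 be measurable on (0,∞), θ ∈ (0,1], and let the symmetric measurable kernel k satisfy hypothesis (K3) with constant k₀. Let r > 1 and let ψ ≥ 0 be measurable. Then the quantity J := (1/2)∫₁^∞∫₁^∞ [(x+y)^r − x^r − y^r]·k(x,y)ψ(x)ψ(y) dy dx (with values in [0,∞]) satisfies: J ≤ 2^{r+1}·k₀·M₁(ψ)·∫₁^∞ x^r (1+a(x))^θ ψ(x) dx if r ∈ (1,2], and J ≤ 4^r·k₀·M_{r−1}(ψ)·∫₁^∞ x^r (1+a(x))^θ ψ(x) dx if r > 2. -/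

import Mathlib

open MeasureTheory Set Real
open scoped ENNReal

private lemma bracket_nonneg {x y r : ℝ} (hx : 0 < x) (hy : 0 < y) (hr : 1 ≤ r) :
    x ^ r + y ^ r ≤ (x + y) ^ r := by
  have hxy : (0:ℝ) < x + y := by linarith
  have esplit : ∀ z : ℝ, 0 < z → z ^ r = z ^ (r - 1) * z := by
    intro z hz
    have e := Real.rpow_add hz (r - 1) 1
    rw [Real.rpow_one] at e
    have e2 : r - 1 + 1 = r := by ring
    rw [e2] at e
    exact e
  have hx1 := esplit x hx
  have hy1 := esplit y hy
  have hxy1 := esplit (x + y) hxy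
  have h1 : x ^ (r - 1) ≤ (x + y) ^ (r - 1) :=
    Real.rpow_le_rpow hx.le (by linarith) (by linarith)
  have h2 : y ^ (r - 1) ≤ (x + y) ^ (r - 1) :=
    Real.rpow_le_rpow hy.le (by linarith) (by linarith)
  rw [hx1, hy1, hxy1]
  nlinarith [Real.rpow_nonneg hx.le (r-1), Real.rpow_nonneg hy.le (r-1)]

private lemma bracket_le {x y r : ℝ} (hx : 0 < x) (hy : 0 < y) (hxy : x ≤ y) (hr : 1 < r) :
    (x + y) ^ r - x ^ r - y ^ r ≤ r * 2 ^ (r - 1) * (x * y ^ (r - 1)) := by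
  have hr0 : (0:ℝ) < r := by linarith
  set c : ℝ := r * 2 ^ (r - 1) * y ^ (r - 1) with hc
  set F : ℝ → ℝ := fun t => c * t + t ^ r + y ^ r - (t + y) ^ r with hF
  have hderiv : ∀ t : ℝ, HasDerivAt F (c + r * t ^ (r - 1) - r * (t + y) ^ (r - 1)) t := by
    intro t
    have h1 : HasDerivAt (fun t : ℝ => c * t) c t := by
      simpa using (hasDerivAt_id t).const_mul c
    have h2 : HasDerivAt (fun t : ℝ => t ^ r) (r * t ^ (r - 1)) t :=
      Real.hasDerivAt_rpow_const (Or.inr hr.le)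
    have h3 : HasDerivAt (fun t : ℝ => (t + y) ^ r) (r * (t + y) ^ (r - 1)) t := by
      have := ((hasDerivAt_id t).add_const y).rpow_const (p := r) (Or.inr hr.le)
      simpa using this
    exact ((h1.add h2).add_const (y ^ r)).sub h3
  have hmono : MonotoneOn F (Icc 0 y) := by
    apply monotoneOn_of_deriv_nonneg (convex_Icc 0 y)
    · have hdiff : Differentiable ℝ F := fun t => (hderiv t).differentiableAt
      exact hdiff.continuous.continuousOn
    · exact fun t _ => ((hderiv t).differentiableAt).differentiableWithinAt
    · intro t ht
      rw [(hderiv t).deriv]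
      simp only [interior_Icc, mem_Ioo] at ht
      have h2y : (t + y) ^ (r - 1) ≤ 2 ^ (r - 1) * y ^ (r - 1) := by
        rw [← Real.mul_rpow (by norm_num) hy.le]
        exact Real.rpow_le_rpow (by linarith [ht.1]) (by linarith [ht.2]) (by linarith)
      have ht0 : 0 ≤ r * t ^ (r - 1) := mul_nonneg hr0.le (Real.rpow_nonneg ht.1.le _)
      nlinarith
  have h0m : (0:ℝ) ∈ Icc 0 y := ⟨le_rfl, by linarith⟩
  have hxm : x ∈ Icc 0 y := ⟨hx.le, hxy⟩
  have hmx := hmono h0m hxm hx.le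
  have hF0 : F 0 = 0 := by
    simp [hF, Real.zero_rpow (ne_of_gt hr0)]
  rw [hF0] at hmx
  have : 0 ≤ c * x + x ^ r + y ^ r - (x + y) ^ r := hmx
  have hxr : 0 ≤ x ^ r := Real.rpow_nonneg hx.le r
  nlinarith

private lemma r_two_le {r : ℝ} (hr : 1 < r) : r * 2 ^ (r - 1) ≤ 4 ^ r := by
  have hlog : (0.6931471803 : ℝ) < Real.log 2 := Real.log_two_gt_d9
  have hexp : r * Real.log 2 + 1 ≤ Real.exp (r * Real.log 2) := Real.add_one_le_exp _
  have h2r : (2:ℝ) ^ r = Real.exp (Real.log 2 * r) := Real.rpow_def_of_pos two_pos r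
  have hr2 : r ≤ 2 * 2 ^ r := by
    rw [h2r, mul_comm (Real.log 2) r]
    nlinarith
  have h4 : (4:ℝ) ^ r = 2 * (2:ℝ) ^ r * 2 ^ (r - 1) := by
    have : (4:ℝ) ^ r = (2:ℝ) ^ (2 * r) := by
      rw [show (4:ℝ) = (2:ℝ) ^ (2:ℝ) by
        rw [show ((2:ℝ):ℝ) = ((2:ℕ):ℝ) by norm_num, Real.rpow_natCast]; norm_num,
        ← Real.rpow_mul (by norm_num)]
    rw [this, show 2 * r = 1 + (r + (r - 1)) by ring, Real.rpow_add two_pos,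
      Real.rpow_add two_pos, Real.rpow_one, mul_assoc]
  rw [h4]
  have h2r1 : (0:ℝ) ≤ 2 ^ (r - 1) := Real.rpow_nonneg (by norm_num) _
  exact mul_le_mul_of_nonneg_right hr2 h2r1

-- case 1 < r ≤ 2, ordered
private lemma pointwise1 {x y r u v : ℝ} (hx : 1 < x) (hy : 1 < y) (hxy : x ≤ y)
    (hr : 1 < r) (hr2 : r ≤ 2) (hu : 0 ≤ u) (hv : 0 ≤ v) :
    ((x + y) ^ r - x ^ r - y ^ r) * (x * y / (x + y)) * (u + v) ≤
      2 ^ (r + 1) * (x ^ r * u * y + x * (y ^ r * v)) := by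
  have hx0 : (0:ℝ) < x := by linarith
  have hy0 : (0:ℝ) < y := by linarith
  have hB := bracket_le hx0 hy0 hxy hr
  have h2r : r * 2 ^ (r - 1) ≤ 2 ^ r := by
    have e := Real.rpow_add (two_pos (α := ℝ)) 1 (r - 1)
    rw [Real.rpow_one] at e
    have e2 : 1 + (r - 1) = r := by ring
    rw [e2] at e
    rw [e]
    have : (0:ℝ) ≤ 2 ^ (r - 1) := Real.rpow_nonneg (by norm_num) _
    nlinarith
  have hyr1 : (0:ℝ) ≤ y ^ (r - 1) := Real.rpow_nonneg hy0.le _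
  have hB' : (x + y) ^ r - x ^ r - y ^ r ≤ 2 ^ r * (x * y ^ (r - 1)) := by
    nlinarith [mul_nonneg hx0.le hyr1]
  have hBnn : 0 ≤ (x + y) ^ r - x ^ r - y ^ r := by
    have := bracket_nonneg hx0 hy0 hr.le; linarith
  have hmin : x * y / (x + y) ≤ x := by
    rw [div_le_iff₀ (by linarith)]
    nlinarith
  have hmin0 : 0 ≤ x * y / (x + y) := by positivity
  -- key powers
  have t1 : x * x * y ^ (r - 1) ≤ x ^ r * y := by
    have e1 : x ^ r * x ^ (2 - r) = x * x := by
      rw [← Real.rpow_add hx0]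
      have e : r + (2 - r) = ((2:ℕ):ℝ) := by push_cast; ring
      rw [e, Real.rpow_natCast]
      ring
    have e2 : x ^ (2 - r) ≤ y ^ (2 - r) := Real.rpow_le_rpow hx0.le hxy (by linarith)
    have e3 : y ^ (2 - r) * y ^ (r - 1) = y := by
      rw [← Real.rpow_add hy0]; norm_num
    have hxr : (0:ℝ) ≤ x ^ r := Real.rpow_nonneg hx0.le _
    calc x * x * y ^ (r - 1) = x ^ r * (x ^ (2 - r) * y ^ (r - 1)) := by rw [← e1]; ring
      _ ≤ x ^ r * (y ^ (2 - r) * y ^ (r - 1)) := by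
          apply mul_le_mul_of_nonneg_left _ hxr
          exact mul_le_mul_of_nonneg_right e2 hyr1
      _ = x ^ r * y := by rw [e3]
  have t2 : x * x * y ^ (r - 1) ≤ x * y ^ r := by
    have e : y ^ r = y * y ^ (r - 1) := by
      have e := Real.rpow_add hy0 1 (r - 1)
      rw [Real.rpow_one] at e
      have e2 : 1 + (r - 1) = r := by ring
      rw [e2] at e
      exact e
    rw [e]
    have h := mul_le_mul_of_nonneg_left hxy (mul_nonneg hx0.le hyr1)
    nlinarith [h]
  -- combine
  have hxyr1 : 0 ≤ x * y ^ (r - 1) := by positivity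
  have step : ((x + y) ^ r - x ^ r - y ^ r) * (x * y / (x + y)) * (u + v) ≤
      (2 ^ r * (x * y ^ (r - 1))) * x * (u + v) := by
    have huv : 0 ≤ u + v := by linarith
    have h1 : ((x + y) ^ r - x ^ r - y ^ r) * (x * y / (x + y)) ≤
        (2 ^ r * (x * y ^ (r - 1))) * x := by
      apply mul_le_mul hB' hmin hmin0 (by positivity)
    exact mul_le_mul_of_nonneg_right h1 huv
  refine step.trans ?_
  have h2rp : (0:ℝ) < 2 ^ r := Real.rpow_pos_of_pos two_pos r
  have h2r1 : (2:ℝ) ^ r ≤ 2 ^ (r + 1) := Real.rpow_le_rpow_of_exponent_le (by norm_num) (by linarith)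
  have hxru : (0:ℝ) ≤ x ^ r * u * y := by
    have := Real.rpow_nonneg hx0.le r; positivity
  have hyrv : (0:ℝ) ≤ x * (y ^ r * v) := by
    have := Real.rpow_nonneg hy0.le r; positivity
  calc (2 ^ r * (x * y ^ (r - 1))) * x * (u + v)
      = 2 ^ r * ((x * x * y ^ (r - 1)) * u) + 2 ^ r * ((x * x * y ^ (r - 1)) * v) := by ring
    _ ≤ 2 ^ r * (x ^ r * y * u) + 2 ^ r * (x * y ^ r * v) := by
        have a1 : (x * x * y ^ (r - 1)) * u ≤ x ^ r * y * u := mul_le_mul_of_nonneg_right t1 hu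
        have a2 : (x * x * y ^ (r - 1)) * v ≤ x * y ^ r * v := mul_le_mul_of_nonneg_right t2 hv
        have := mul_le_mul_of_nonneg_left a1 h2rp.le
        have := mul_le_mul_of_nonneg_left a2 h2rp.le
        linarith
    _ = 2 ^ r * (x ^ r * u * y + x * (y ^ r * v)) := by ring
    _ ≤ 2 ^ (r + 1) * (x ^ r * u * y + x * (y ^ r * v)) := by
        apply mul_le_mul_of_nonneg_right h2r1; linarith

-- case r > 2, ordered
private lemma pointwise2 {x y r u v : ℝ} (hx : 1 < x) (hy : 1 < y) (hxy : x ≤ y)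
    (hr : 2 < r) (hu : 0 ≤ u) (hv : 0 ≤ v) :
    ((x + y) ^ r - x ^ r - y ^ r) * (x * y / (x + y)) * (u + v) ≤
      4 ^ r * (x ^ r * u * y ^ (r - 1) + x ^ (r - 1) * (y ^ r * v)) := by
  have hr1 : 1 < r := by linarith
  have hx0 : (0:ℝ) < x := by linarith
  have hy0 : (0:ℝ) < y := by linarith
  have hB := bracket_le hx0 hy0 hxy hr1
  have hBnn : 0 ≤ (x + y) ^ r - x ^ r - y ^ r := by
    have := bracket_nonneg hx0 hy0 hr1.le; linarith
  have hmin : x * y / (x + y) ≤ x := by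
    rw [div_le_iff₀ (by linarith)]; nlinarith
  have hmin0 : 0 ≤ x * y / (x + y) := by positivity
  have hyr1 : (0:ℝ) ≤ y ^ (r - 1) := Real.rpow_nonneg hy0.le _
  have hc : r * 2 ^ (r - 1) ≤ 4 ^ r := r_two_le hr1
  have hcn : (0:ℝ) ≤ r * 2 ^ (r - 1) := by
    have : (0:ℝ) ≤ 2 ^ (r - 1) := Real.rpow_nonneg (by norm_num) _
    nlinarith
  -- powers
  have t1 : x * x * y ^ (r - 1) ≤ x ^ r * y ^ (r - 1) := by
    have e : x * x ≤ x ^ r := by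
      have : x ^ ((2:ℕ):ℝ) ≤ x ^ r := Real.rpow_le_rpow_of_exponent_le hx.le (by push_cast; linarith)
      rw [Real.rpow_natCast] at this
      nlinarith [this]
    exact mul_le_mul_of_nonneg_right e hyr1
  have t2 : x * x * y ^ (r - 1) ≤ x ^ (r - 1) * y ^ r := by
    have e1 : x ≤ x ^ (r - 1) := by
      have : x ^ (1:ℝ) ≤ x ^ (r - 1) := Real.rpow_le_rpow_of_exponent_le hx.le (by linarith)
      rwa [Real.rpow_one] at this
    have e2 : y ^ r = y * y ^ (r - 1) := by
      have e := Real.rpow_add hy0 1 (r - 1)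
      rw [Real.rpow_one] at e
      have e3 : 1 + (r - 1) = r := by ring
      rw [e3] at e
      exact e
    rw [e2]
    have hxr1 : (0:ℝ) ≤ x ^ (r - 1) := Real.rpow_nonneg hx0.le _
    have h := mul_le_mul_of_nonneg_right (mul_le_mul e1 hxy hx0.le hxr1) hyr1
    nlinarith [h]
  have step : ((x + y) ^ r - x ^ r - y ^ r) * (x * y / (x + y)) * (u + v) ≤
      (r * 2 ^ (r - 1) * (x * y ^ (r - 1))) * x * (u + v) := by
    have huv : 0 ≤ u + v := by linarith
    have h1 : ((x + y) ^ r - x ^ r - y ^ r) * (x * y / (x + y)) ≤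
        (r * 2 ^ (r - 1) * (x * y ^ (r - 1))) * x := by
      apply mul_le_mul hB hmin hmin0
      · positivity
    exact mul_le_mul_of_nonneg_right h1 huv
  refine step.trans ?_
  have h4r : (0:ℝ) < 4 ^ r := Real.rpow_pos_of_pos (by norm_num) r
  calc (r * 2 ^ (r - 1) * (x * y ^ (r - 1))) * x * (u + v)
      = (r * 2 ^ (r - 1)) * ((x * x * y ^ (r - 1)) * u) +
        (r * 2 ^ (r - 1)) * ((x * x * y ^ (r - 1)) * v) := by ring
    _ ≤ 4 ^ r * ((x ^ r * y ^ (r - 1)) * u) + 4 ^ r * ((x ^ (r - 1) * y ^ r) * v) := by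
        have a1 : (x * x * y ^ (r - 1)) * u ≤ (x ^ r * y ^ (r - 1)) * u :=
          mul_le_mul_of_nonneg_right t1 hu
        have a2 : (x * x * y ^ (r - 1)) * v ≤ (x ^ (r - 1) * y ^ r) * v :=
          mul_le_mul_of_nonneg_right t2 hv
        have n1 : 0 ≤ (x * x * y ^ (r - 1)) * u := by positivity
        have n2 : 0 ≤ (x * x * y ^ (r - 1)) * v := by positivity
        have b1 : (r * 2 ^ (r - 1)) * ((x * x * y ^ (r - 1)) * u) ≤
            4 ^ r * ((x ^ r * y ^ (r - 1)) * u) := by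
          calc (r * 2 ^ (r - 1)) * ((x * x * y ^ (r - 1)) * u) ≤
              4 ^ r * ((x * x * y ^ (r - 1)) * u) := mul_le_mul_of_nonneg_right hc n1
            _ ≤ 4 ^ r * ((x ^ r * y ^ (r - 1)) * u) := mul_le_mul_of_nonneg_left a1 h4r.le
        have b2 : (r * 2 ^ (r - 1)) * ((x * x * y ^ (r - 1)) * v) ≤
            4 ^ r * ((x ^ (r - 1) * y ^ r) * v) := by
          calc (r * 2 ^ (r - 1)) * ((x * x * y ^ (r - 1)) * v) ≤
              4 ^ r * ((x * x * y ^ (r - 1)) * v) := mul_le_mul_of_nonneg_right hc n2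
            _ ≤ 4 ^ r * ((x ^ (r - 1) * y ^ r) * v) := mul_le_mul_of_nonneg_left a2 h4r.le
        linarith
    _ = 4 ^ r * (x ^ r * u * y ^ (r - 1) + x ^ (r - 1) * (y ^ r * v)) := by ring

private lemma aux_integral (F : ℝ → ℝ → ℝ) (P Q : ℝ → ℝ) (C : ℝ) (hC : 0 ≤ C)
    (hPm : Measurable P) (hQm : Measurable Q)
    (hP0 : ∀ x ∈ Ioi (1:ℝ), 0 ≤ P x) (hQ0 : ∀ x ∈ Ioi (1:ℝ), 0 ≤ Q x)
    (hbd : ∀ x ∈ Ioi (1:ℝ), ∀ y ∈ Ioi (1:ℝ), F x y ≤ C * (P x * Q y + Q x * P y)) :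
    (1/2 : ℝ≥0∞) * ∫⁻ x in Ioi (1:ℝ), ∫⁻ y in Ioi (1:ℝ), ENNReal.ofReal (F x y) ≤
      ENNReal.ofReal C * (∫⁻ x in Ioi (1:ℝ), ENNReal.ofReal (Q x)) *
        ∫⁻ x in Ioi (1:ℝ), ENNReal.ofReal (P x) := by
  set IP := ∫⁻ x in Ioi (1:ℝ), ENNReal.ofReal (P x) with hIP
  set IQ := ∫⁻ x in Ioi (1:ℝ), ENNReal.ofReal (Q x) with hIQ
  have step1 : ∀ x ∈ Ioi (1:ℝ), (∫⁻ y in Ioi (1:ℝ), ENNReal.ofReal (F x y)) ≤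
      ENNReal.ofReal C * (ENNReal.ofReal (P x) * IQ + ENNReal.ofReal (Q x) * IP) := by
    intro x hx
    have h1 : (∫⁻ y in Ioi (1:ℝ), ENNReal.ofReal (F x y)) ≤
        ∫⁻ y in Ioi (1:ℝ), ENNReal.ofReal C *
          (ENNReal.ofReal (P x) * ENNReal.ofReal (Q y) +
            ENNReal.ofReal (Q x) * ENNReal.ofReal (P y)) := by
      refine lintegral_mono_ae ((ae_restrict_iff' measurableSet_Ioi).2 (ae_of_all _ ?_))
      intro y hy
      calc ENNReal.ofReal (F x y) ≤ ENNReal.ofReal (C * (P x * Q y + Q x * P y)) :=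
            ENNReal.ofReal_le_ofReal (hbd x hx y hy)
        _ = _ := by
            rw [ENNReal.ofReal_mul hC,
              ENNReal.ofReal_add (mul_nonneg (hP0 x hx) (hQ0 y hy))
                (mul_nonneg (hQ0 x hx) (hP0 y hy)),
              ENNReal.ofReal_mul (hP0 x hx), ENNReal.ofReal_mul (hQ0 x hx)]
    refine h1.trans (le_of_eq ?_)
    rw [lintegral_const_mul' _ _ ENNReal.ofReal_ne_top]
    congr 1
    rw [lintegral_add_left ((hQm.ennreal_ofReal).const_mul _),
      lintegral_const_mul' _ _ ENNReal.ofReal_ne_top,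
      lintegral_const_mul' _ _ ENNReal.ofReal_ne_top]
  have step2 : (∫⁻ x in Ioi (1:ℝ), ∫⁻ y in Ioi (1:ℝ), ENNReal.ofReal (F x y)) ≤
      ENNReal.ofReal C * (IP * IQ + IQ * IP) := by
    have h2 : (∫⁻ x in Ioi (1:ℝ), ∫⁻ y in Ioi (1:ℝ), ENNReal.ofReal (F x y)) ≤
        ∫⁻ x in Ioi (1:ℝ), ENNReal.ofReal C *
          (ENNReal.ofReal (P x) * IQ + ENNReal.ofReal (Q x) * IP) :=
      lintegral_mono_ae ((ae_restrict_iff' measurableSet_Ioi).2 (ae_of_all _ step1))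
    refine h2.trans (le_of_eq ?_)
    rw [lintegral_const_mul' _ _ ENNReal.ofReal_ne_top]
    congr 1
    rw [lintegral_add_left ((hPm.ennreal_ofReal).mul_const _),
      lintegral_mul_const'' _ (hPm.ennreal_ofReal.aemeasurable),
      lintegral_mul_const'' _ (hQm.ennreal_ofReal.aemeasurable)]
  calc (1/2 : ℝ≥0∞) * ∫⁻ x in Ioi (1:ℝ), ∫⁻ y in Ioi (1:ℝ), ENNReal.ofReal (F x y)
      ≤ (1/2 : ℝ≥0∞) * (ENNReal.ofReal C * (IP * IQ + IQ * IP)) :=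
        mul_le_mul_right step2 _
    _ = ((1/2 : ℝ≥0∞) * 2) * (ENNReal.ofReal C * (IQ * IP)) := by
        rw [mul_comm IP IQ, ← two_mul]; ring
    _ = ENNReal.ofReal C * IQ * IP := by
        rw [show (1/2 : ℝ≥0∞) * 2 = 1 by
          rw [one_div, ENNReal.inv_mul_cancel (by norm_num) (by norm_num)], one_mul, mul_assoc]

/-- under (K3), for `r > 1` and `ψ ≥ 0`, the quantity
`J = (1/2)∫₁^∞∫₁^∞ [(x+y)^r − x^r − y^r] k(x,y)ψ(x)ψ(y) dy dx` satisfies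
`J ≤ 2^{r+1} k₀ M₁(ψ) ∫₁^∞ x^r (1+a(x))^θ ψ(x) dx` if `r ∈ (1,2]`, and
`J ≤ 4^r k₀ M_{r−1}(ψ) ∫₁^∞ x^r (1+a(x))^θ ψ(x) dx` if `r > 2`. -/
theorem large_large_coag_estimate (a : ℝ → ℝ) (θ k₀ r : ℝ) (k : ℝ → ℝ → ℝ)
    (ψ : ℝ → ℝ)
    (ha : Measurable a) (ha0 : ∀ x ∈ Ioi (0 : ℝ), 0 ≤ a x)
    (hθ0 : 0 < θ) (hθ : θ ≤ 1)
    (hkm : Measurable (Function.uncurry k))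
    (hksym : ∀ x y : ℝ, 0 < x → 0 < y → k x y = k y x)
    (hknn : ∀ x y : ℝ, 0 < x → 0 < y → 0 ≤ k x y)
    (hk₀ : 0 < k₀)
    (hK3 : ∀ x y : ℝ, 1 < x → 1 < y →
      k x y ≤ k₀ * (x * y / (x + y)) * ((1 + a x) ^ θ + (1 + a y) ^ θ))
    (hr : 1 < r)
    (hψm : Measurable ψ) (hψ0 : ∀ x ∈ Ioi (0 : ℝ), 0 ≤ ψ x) :
    (r ≤ 2 →
      (1 / 2 : ℝ≥0∞) * ∫⁻ x in Ioi (1 : ℝ), ∫⁻ y in Ioi (1 : ℝ),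
          ENNReal.ofReal (((x + y) ^ r - x ^ r - y ^ r) * (k x y * ψ x * ψ y)) ≤
        ENNReal.ofReal ((2 : ℝ) ^ (r + 1) * k₀) *
          (∫⁻ x in Ioi (0 : ℝ), ENNReal.ofReal (x * ψ x)) *
          ∫⁻ x in Ioi (1 : ℝ), ENNReal.ofReal (x ^ r * (1 + a x) ^ θ * ψ x)) ∧
    (2 < r →
      (1 / 2 : ℝ≥0∞) * ∫⁻ x in Ioi (1 : ℝ), ∫⁻ y in Ioi (1 : ℝ),
          ENNReal.ofReal (((x + y) ^ r - x ^ r - y ^ r) * (k x y * ψ x * ψ y)) ≤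
        ENNReal.ofReal ((4 : ℝ) ^ r * k₀) *
          (∫⁻ x in Ioi (0 : ℝ), ENNReal.ofReal (x ^ (r - 1) * ψ x)) *
          ∫⁻ x in Ioi (1 : ℝ), ENNReal.ofReal (x ^ r * (1 + a x) ^ θ * ψ x)) := by
  have hPm : Measurable (fun x : ℝ => x ^ r * (1 + a x) ^ θ * ψ x) := by
    have h1 : Measurable (fun x : ℝ => x ^ r) :=
      (Real.continuous_rpow_const (by linarith)).measurable
    have h2 : Measurable (fun x : ℝ => (1 + a x) ^ θ) :=
      ((Real.continuous_rpow_const hθ0.le).measurable).comp (measurable_const.add ha)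
    exact (h1.mul h2).mul hψm
  have hP0 : ∀ x ∈ Ioi (1:ℝ), 0 ≤ x ^ r * (1 + a x) ^ θ * ψ x := by
    intro x hx
    rw [mem_Ioi] at hx
    have hx0 : (0:ℝ) < x := by linarith
    have h1 : 0 ≤ (1 + a x) ^ θ :=
      Real.rpow_nonneg (by linarith [ha0 x (mem_Ioi.2 hx0)]) θ
    exact mul_nonneg (mul_nonneg (Real.rpow_nonneg hx0.le r) h1) (hψ0 x (mem_Ioi.2 hx0))
  constructor
  · -- case r ≤ 2
    intro hr2
    have key1 : ∀ x ∈ Ioi (1:ℝ), ∀ y ∈ Ioi (1:ℝ), x ≤ y →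
        ((x + y) ^ r - x ^ r - y ^ r) * (k x y * ψ x * ψ y) ≤
          ((2:ℝ) ^ (r + 1) * k₀) *
            ((x ^ r * (1 + a x) ^ θ * ψ x) * (y * ψ y) +
              (x * ψ x) * (y ^ r * (1 + a y) ^ θ * ψ y)) := by
      intro x hx y hy hxy
      rw [mem_Ioi] at hx hy
      have hx0 : (0:ℝ) < x := by linarith
      have hy0 : (0:ℝ) < y := by linarith
      have hψx := hψ0 x (mem_Ioi.2 hx0)
      have hψy := hψ0 y (mem_Ioi.2 hy0)
      have hu : 0 ≤ (1 + a x) ^ θ :=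
        Real.rpow_nonneg (by linarith [ha0 x (mem_Ioi.2 hx0)]) θ
      have hv : 0 ≤ (1 + a y) ^ θ :=
        Real.rpow_nonneg (by linarith [ha0 y (mem_Ioi.2 hy0)]) θ
      have hBnn : 0 ≤ (x + y) ^ r - x ^ r - y ^ r := by
        have := bracket_nonneg hx0 hy0 hr.le; linarith
      have hpw := pointwise1 hx hy hxy hr hr2 hu hv
      calc ((x + y) ^ r - x ^ r - y ^ r) * (k x y * ψ x * ψ y)
          ≤ ((x + y) ^ r - x ^ r - y ^ r) *
            ((k₀ * (x * y / (x + y)) * ((1 + a x) ^ θ + (1 + a y) ^ θ)) * ψ x * ψ y) := by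
            apply mul_le_mul_of_nonneg_left _ hBnn
            exact mul_le_mul_of_nonneg_right
              (mul_le_mul_of_nonneg_right (hK3 x y hx hy) hψx) hψy
        _ = (k₀ * (ψ x * ψ y)) *
            (((x + y) ^ r - x ^ r - y ^ r) * (x * y / (x + y)) *
              ((1 + a x) ^ θ + (1 + a y) ^ θ)) := by ring
        _ ≤ (k₀ * (ψ x * ψ y)) *
            (2 ^ (r + 1) * (x ^ r * (1 + a x) ^ θ * y + x * (y ^ r * (1 + a y) ^ θ))) :=
            mul_le_mul_of_nonneg_left hpw (mul_nonneg hk₀.le (mul_nonneg hψx hψy))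
        _ = ((2:ℝ) ^ (r + 1) * k₀) *
            ((x ^ r * (1 + a x) ^ θ * ψ x) * (y * ψ y) +
              (x * ψ x) * (y ^ r * (1 + a y) ^ θ * ψ y)) := by ring
    have hbd : ∀ x ∈ Ioi (1:ℝ), ∀ y ∈ Ioi (1:ℝ),
        ((x + y) ^ r - x ^ r - y ^ r) * (k x y * ψ x * ψ y) ≤
          ((2:ℝ) ^ (r + 1) * k₀) *
            ((x ^ r * (1 + a x) ^ θ * ψ x) * (y * ψ y) +
              (x * ψ x) * (y ^ r * (1 + a y) ^ θ * ψ y)) := by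
      intro x hx y hy
      rcases le_total x y with h | h
      · exact key1 x hx y hy h
      · have hx0 : (0:ℝ) < x := lt_trans one_pos (mem_Ioi.1 hx)
        have hy0 : (0:ℝ) < y := lt_trans one_pos (mem_Ioi.1 hy)
        have e1 : ((x + y) ^ r - x ^ r - y ^ r) * (k x y * ψ x * ψ y)
            = ((y + x) ^ r - y ^ r - x ^ r) * (k y x * ψ y * ψ x) := by
          rw [hksym x y hx0 hy0, add_comm x y]; ring
        rw [e1]
        exact (key1 y hy x hx h).trans (le_of_eq (by ring))
    have main := aux_integral
      (fun x y => ((x + y) ^ r - x ^ r - y ^ r) * (k x y * ψ x * ψ y))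
      (fun x => x ^ r * (1 + a x) ^ θ * ψ x) (fun x => x * ψ x)
      ((2:ℝ) ^ (r + 1) * k₀)
      (mul_nonneg (Real.rpow_nonneg (by norm_num) _) hk₀.le)
      hPm (measurable_id.mul hψm) hP0
      (fun x hx => mul_nonneg (by linarith [mem_Ioi.1 hx]) (hψ0 x (mem_Ioi.2 (lt_trans one_pos (mem_Ioi.1 hx)))))
      hbd
    refine main.trans ?_
    refine mul_le_mul_left (mul_le_mul_right ?_ _) _
    exact lintegral_mono_set (Ioi_subset_Ioi zero_le_one)
  · -- case 2 < r
    intro hr2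
    have key1 : ∀ x ∈ Ioi (1:ℝ), ∀ y ∈ Ioi (1:ℝ), x ≤ y →
        ((x + y) ^ r - x ^ r - y ^ r) * (k x y * ψ x * ψ y) ≤
          ((4:ℝ) ^ r * k₀) *
            ((x ^ r * (1 + a x) ^ θ * ψ x) * (y ^ (r - 1) * ψ y) +
              (x ^ (r - 1) * ψ x) * (y ^ r * (1 + a y) ^ θ * ψ y)) := by
      intro x hx y hy hxy
      rw [mem_Ioi] at hx hy
      have hx0 : (0:ℝ) < x := by linarith
      have hy0 : (0:ℝ) < y := by linarith
      have hψx := hψ0 x (mem_Ioi.2 hx0)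
      have hψy := hψ0 y (mem_Ioi.2 hy0)
      have hu : 0 ≤ (1 + a x) ^ θ :=
        Real.rpow_nonneg (by linarith [ha0 x (mem_Ioi.2 hx0)]) θ
      have hv : 0 ≤ (1 + a y) ^ θ :=
        Real.rpow_nonneg (by linarith [ha0 y (mem_Ioi.2 hy0)]) θ
      have hBnn : 0 ≤ (x + y) ^ r - x ^ r - y ^ r := by
        have := bracket_nonneg hx0 hy0 hr.le; linarith
      have hpw := pointwise2 hx hy hxy hr2 hu hv
      calc ((x + y) ^ r - x ^ r - y ^ r) * (k x y * ψ x * ψ y)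
          ≤ ((x + y) ^ r - x ^ r - y ^ r) *
            ((k₀ * (x * y / (x + y)) * ((1 + a x) ^ θ + (1 + a y) ^ θ)) * ψ x * ψ y) := by
            apply mul_le_mul_of_nonneg_left _ hBnn
            exact mul_le_mul_of_nonneg_right
              (mul_le_mul_of_nonneg_right (hK3 x y hx hy) hψx) hψy
        _ = (k₀ * (ψ x * ψ y)) *
            (((x + y) ^ r - x ^ r - y ^ r) * (x * y / (x + y)) *
              ((1 + a x) ^ θ + (1 + a y) ^ θ)) := by ring
        _ ≤ (k₀ * (ψ x * ψ y)) *
            (4 ^ r * (x ^ r * (1 + a x) ^ θ * y ^ (r - 1) +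
              x ^ (r - 1) * (y ^ r * (1 + a y) ^ θ))) :=
            mul_le_mul_of_nonneg_left hpw (mul_nonneg hk₀.le (mul_nonneg hψx hψy))
        _ = ((4:ℝ) ^ r * k₀) *
            ((x ^ r * (1 + a x) ^ θ * ψ x) * (y ^ (r - 1) * ψ y) +
              (x ^ (r - 1) * ψ x) * (y ^ r * (1 + a y) ^ θ * ψ y)) := by ring
    have hbd : ∀ x ∈ Ioi (1:ℝ), ∀ y ∈ Ioi (1:ℝ),
        ((x + y) ^ r - x ^ r - y ^ r) * (k x y * ψ x * ψ y) ≤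
          ((4:ℝ) ^ r * k₀) *
            ((x ^ r * (1 + a x) ^ θ * ψ x) * (y ^ (r - 1) * ψ y) +
              (x ^ (r - 1) * ψ x) * (y ^ r * (1 + a y) ^ θ * ψ y)) := by
      intro x hx y hy
      rcases le_total x y with h | h
      · exact key1 x hx y hy h
      · have hx0 : (0:ℝ) < x := lt_trans one_pos (mem_Ioi.1 hx)
        have hy0 : (0:ℝ) < y := lt_trans one_pos (mem_Ioi.1 hy)
        have e1 : ((x + y) ^ r - x ^ r - y ^ r) * (k x y * ψ x * ψ y)
            = ((y + x) ^ r - y ^ r - x ^ r) * (k y x * ψ y * ψ x) := by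
          rw [hksym x y hx0 hy0, add_comm x y]; ring
        rw [e1]
        exact (key1 y hy x hx h).trans (le_of_eq (by ring))
    have main := aux_integral
      (fun x y => ((x + y) ^ r - x ^ r - y ^ r) * (k x y * ψ x * ψ y))
      (fun x => x ^ r * (1 + a x) ^ θ * ψ x) (fun x => x ^ (r - 1) * ψ x)
      ((4:ℝ) ^ r * k₀)
      (mul_nonneg (Real.rpow_nonneg (by norm_num) _) hk₀.le)
      hPm ((Real.continuous_rpow_const (by linarith)).measurable.mul hψm)
      hP0
      (fun x hx => mul_nonneg
        (Real.rpow_nonneg (le_of_lt (lt_trans one_pos (mem_Ioi.1 hx))) _)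
        (hψ0 x (mem_Ioi.2 (lt_trans one_pos (mem_Ioi.1 hx)))))
      hbd
    refine main.trans ?_
    refine mul_le_mul_left (mul_le_mul_right ?_ _) _
    exact lintegral_mono_set (Ioi_subset_Ioi zero_le_one)
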